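/- arXiv:1207.0121 — 2 statements merged into one kernel-verified Lean document; each statement's English description precedes it below -/
import Mathlib

section
/- For every functor A : S → Set, the functor Â : Set → Set given by Â(X) = Σ_n [X over n] ⊗_{S_n} A(n) preserves pullbacks along monomorphisms. -/
/-- A functor from the skeleton `S` of finite sets and surjections to `Set`:
a family of sets with a functorial action of surjections. -/
structure SFunctor where
  obj : ℕ → Type
  map : ∀ {n m : ℕ} (f : Fin n → Fin m), Function.Surjective f → obj n → obj m
  map_id : ∀ {n : ℕ} (a : obj n), map id Function.surjective_id a = a
  map_map : ∀ {n m k : ℕ} (f : Fin n → Fin m) (hf : Function.Surjective f)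
      (g : Fin m → Fin k) (hg : Function.Surjective g) (a : obj n),
      map g hg (map f hf a) = map (g ∘ f) (hg.comp hf) a

/-- The relation identifying `(x⃗ ∘ σ, a)` with `(x⃗, σ · a)` for bijections `σ`,
on pairs of an injection `Fin n → X` and an element of `A(n)`. -/
def HatRel (A : SFunctor) (X : Type) :
    (Σ n : ℕ, {x : Fin n → X // Function.Injective x} × A.obj n) →
    (Σ n : ℕ, {x : Fin n → X // Function.Injective x} × A.obj n) → Prop :=
  fun p q => ∃ e : Fin p.1 ≃ Fin q.1,
    (∀ i, q.2.1.1 (e i) = p.2.1.1 i) ∧ A.map e e.surjective p.2.2 = q.2.2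

/-- `Â(X) = Σ_n [X over n] ⊗_{S_n} A(n)`. -/
def HatA (A : SFunctor) (X : Type) : Type := Quot (HatRel A X)

/-- The class `[x⃗, a]` in `Â(X)`. -/
def hatMk (A : SFunctor) {X : Type} {n : ℕ} (x : Fin n → X) (hx : Function.Injective x)
    (a : A.obj n) : HatA A X :=
  Quot.mk _ ⟨n, ⟨x, hx⟩, a⟩

/-- The characterizing property of the action of `Â` on functions:
`Â(f)([x⃗,a]) = [y⃗, A(α)(a)]` whenever `f ∘ x⃗ = y⃗ ∘ α` is an epi-mono factorization. -/
def HatMapSpec (A : SFunctor)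
    (F : ∀ (X Y : Type), (X → Y) → HatA A X → HatA A Y) : Prop :=
  ∀ (X Y : Type) (f : X → Y) (n m : ℕ) (x : Fin n → X) (hx : Function.Injective x)
    (a : A.obj n) (α : Fin n → Fin m) (hα : Function.Surjective α)
    (y : Fin m → Y) (hy : Function.Injective y),
    (∀ i, f (x i) = y (α i)) →
    F X Y f (hatMk A x hx a) = hatMk A y hy (A.map α hα a)

/-- A commutative square of sets which is a pullback (elementwise formulation). -/
def IsSetPullback {P A B C : Type} (pa : P → A) (pb : P → B) (f : A → C) (g : B → C) : Prop :=
  (∀ p, f (pa p) = g (pb p)) ∧ ∀ a b, f a = g b → ∃! p, pa p = a ∧ pb p = b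

/-- A commutative square of sets which is a weak pullback (elementwise formulation). -/
def IsWeakSetPullback {P A B C : Type} (pa : P → A) (pb : P → B) (f : A → C) (g : B → C) : Prop :=
  (∀ p, f (pa p) = g (pb p)) ∧ ∀ a b, f a = g b → ∃ p, pa p = a ∧ pb p = b

/-- Naturality of a family `τ n : A(n) → B(n)` with respect to surjections. -/
def SNatTrans (A B : SFunctor) (τ : ∀ n, A.obj n → B.obj n) : Prop :=
  ∀ (n m : ℕ) (f : Fin n → Fin m) (hf : Function.Surjective f) (a : A.obj n),
    τ m (A.map f hf a) = B.map f hf (τ n a)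

/-- The characterizing property of `τ̂ : Â → B̂`, namely `τ̂_X([x⃗,a]) = [x⃗, τ(a)]`. -/
def HatTransSpec (A B : SFunctor) (τ : ∀ n, A.obj n → B.obj n)
    (t : ∀ X : Type, HatA A X → HatA B X) : Prop :=
  ∀ (X : Type) (n : ℕ) (x : Fin n → X) (hx : Function.Injective x) (a : A.obj n),
    t X (hatMk A x hx a) = hatMk B x hx (τ n a)


section Aux

/-- congruence for `SFunctor.map` across an equality of functions. -/
theorem SFunctor.map_congr (A : SFunctor) {n m : ℕ} {f g : Fin n → Fin m}
    (hf : Function.Surjective f) (hg : Function.Surjective g) (h : f = g) (a : A.obj n) :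
    A.map f hf a = A.map g hg a := by subst h; rfl

theorem SFunctor.map_id' (A : SFunctor) {n : ℕ} {f : Fin n → Fin n}
    (hf : Function.Surjective f) (h : f = id) (a : A.obj n) :
    A.map f hf a = a := by subst h; exact A.map_id a

theorem hatRel_equivalence (A : SFunctor) (X : Type) : Equivalence (HatRel A X) := by
  constructor
  · intro p
    exact ⟨Equiv.refl _, fun i => rfl, A.map_id' _ (by ext i; rfl) _⟩
  · rintro p q ⟨e, hx, ha⟩
    refine ⟨e.symm, fun i => by rw [← hx, Equiv.apply_symm_apply], ?_⟩
    rw [← ha, A.map_map]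
    exact A.map_id' _ (by ext i; simp) _
  · rintro p q r ⟨e, hx, ha⟩ ⟨e', hx', ha'⟩
    refine ⟨e.trans e', fun i => by simp [Equiv.trans_apply, hx', hx], ?_⟩
    rw [← ha', ← ha, A.map_map]
    exact A.map_congr _ _ (by ext i; simp) _

theorem hatMk_exact (A : SFunctor) {X : Type} {n m : ℕ} {x : Fin n → X}
    {hx : Function.Injective x} {a : A.obj n} {y : Fin m → X} {hy : Function.Injective y}
    {b : A.obj m} (h : hatMk A x hx a = hatMk A y hy b) :
    HatRel A X ⟨n, ⟨x, hx⟩, a⟩ ⟨m, ⟨y, hy⟩, b⟩ :=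
  ((hatRel_equivalence A X).eqvGen_iff).mp (Quot.eq.mp h)

theorem hatMk_congr (A : SFunctor) {X : Type} {n : ℕ} {x x' : Fin n → X}
    (hx : Function.Injective x) (hx' : Function.Injective x') (h : x = x') (a : A.obj n) :
    hatMk A x hx a = hatMk A x' hx' a := by subst h; rfl

/-- Epi-mono factorization of a map out of `Fin n`. -/
theorem exists_factorization {Y : Type} {n : ℕ} (h : Fin n → Y) :
    ∃ (m : ℕ) (α : Fin n → Fin m) (y : Fin m → Y),
      Function.Surjective α ∧ Function.Injective y ∧ ∀ i, h i = y (α i) := by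
  classical
  have hfin : (Set.range h).Finite := Set.finite_range h
  haveI : Fintype (Set.range h) := hfin.fintype
  let e : (Set.range h) ≃ Fin (Fintype.card (Set.range h)) := Fintype.equivFin _
  refine ⟨_, fun i => e ⟨h i, ⟨i, rfl⟩⟩, fun j => (e.symm j).1, ?_, ?_, ?_⟩
  · intro j
    obtain ⟨i, hi⟩ := (e.symm j).2
    refine ⟨i, ?_⟩
    show e ⟨h i, ⟨i, rfl⟩⟩ = j
    rw [show (⟨h i, ⟨i, rfl⟩⟩ : Set.range h) = e.symm j from Subtype.ext hi,
      Equiv.apply_symm_apply]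
  · intro j j' hjj'
    have : e.symm j = e.symm j' := Subtype.ext hjj'
    simpa using congrArg e this
  · intro i
    show h i = (e.symm (e ⟨h i, ⟨i, rfl⟩⟩) : Set.range h).1
    rw [Equiv.symm_apply_apply]

/-- Value of `F f` on a class whose composite with `f` is still injective. -/
theorem hatF_apply_inj (A : SFunctor) (F : ∀ (X Y : Type), (X → Y) → HatA A X → HatA A Y)
    (hF : HatMapSpec A F) {X Y : Type} (f : X → Y) {n : ℕ} (x : Fin n → X)
    (hx : Function.Injective x) (a : A.obj n) (hfx : Function.Injective (f ∘ x)) :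
    F X Y f (hatMk A x hx a) = hatMk A (f ∘ x) hfx a := by
  rw [hF X Y f n n x hx a id Function.surjective_id (f ∘ x) hfx (fun i => rfl), A.map_id]

/-- `F` sends injections to injections. -/
theorem hatF_mono (A : SFunctor) (F : ∀ (X Y : Type), (X → Y) → HatA A X → HatA A Y)
    (hF : HatMapSpec A F) {X Y : Type} (f : X → Y) (hf : Function.Injective f) :
    Function.Injective (F X Y f) := by
  intro q q' h
  induction q using Quot.ind with | _ p =>
  induction q' using Quot.ind with | _ p' =>
  obtain ⟨n, ⟨x, hx⟩, a⟩ := p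
  obtain ⟨n', ⟨x', hx'⟩, a'⟩ := p'
  rw [show (Quot.mk _ ⟨n, ⟨x, hx⟩, a⟩ : HatA A X) = hatMk A x hx a from rfl,
    show (Quot.mk _ ⟨n', ⟨x', hx'⟩, a'⟩ : HatA A X) = hatMk A x' hx' a' from rfl] at h ⊢
  rw [hatF_apply_inj A F hF f x hx a (hf.comp hx),
    hatF_apply_inj A F hF f x' hx' a' (hf.comp hx')] at h
  obtain ⟨e, hxe, hae⟩ := hatMk_exact A h
  exact Quot.sound ⟨e, fun i => hf (hxe i), hae⟩

/-- Uniqueness of epi-mono factorizations at the level of `hatMk`. -/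
theorem hatMk_factor_unique (A : SFunctor) {X : Type} {n m m' : ℕ}
    (β : Fin n → Fin m) (hβ : Function.Surjective β) (y : Fin m → X)
    (hy : Function.Injective y)
    (β' : Fin n → Fin m') (hβ' : Function.Surjective β') (y' : Fin m' → X)
    (hy' : Function.Injective y')
    (hcomm : ∀ i, y (β i) = y' (β' i)) (c : A.obj n) :
    hatMk A y hy (A.map β hβ c) = hatMk A y' hy' (A.map β' hβ' c) := by
  classical
  let e0 : Fin m → Fin m' := fun j => β' (Function.surjInv hβ j)
  have he0y : ∀ j, y' (e0 j) = y j := by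
    intro j
    rw [← hcomm, Function.surjInv_eq hβ]
  have he0β : ∀ i, e0 (β i) = β' i := by
    intro i
    apply hy'
    rw [he0y, hcomm]
  have he0inj : Function.Injective e0 := by
    intro j j' hj
    apply hy
    rw [← he0y, ← he0y, hj]
  have he0surj : Function.Surjective e0 := by
    intro j'
    obtain ⟨i, hi⟩ := hβ' j'
    exact ⟨β i, by rw [he0β, hi]⟩
  let e : Fin m ≃ Fin m' := Equiv.ofBijective e0 ⟨he0inj, he0surj⟩
  apply Quot.sound
  refine ⟨e, fun j => he0y j, ?_⟩
  rw [A.map_map]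
  exact A.map_congr _ _ (funext fun i => he0β i) _

end Aux

/-- For every functor `A : S → Set`, the endofunctor `Â` preserves
pullbacks along monomorphisms. -/
theorem hat_preserves_pullbacks_along_monos (A : SFunctor)
    (F : ∀ (X Y : Type), (X → Y) → HatA A X → HatA A Y) (hF : HatMapSpec A F)
    {P Y Z X : Type} (p1 : P → Y) (p2 : P → Z) (f : Y → X) (g : Z → X)
    (hpb : IsSetPullback p1 p2 f g) (hmono : Function.Injective g) :
    IsSetPullback (F P Y p1) (F P Z p2) (F Y X f) (F Z X g) := by
  classical
  obtain ⟨hcomm, hlift⟩ := hpb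
  -- the pullback of a mono is a mono
  have hp1 : Function.Injective p1 := by
    intro a b hab
    have h2 : p2 a = p2 b := hmono (by rw [← hcomm, ← hcomm, hab])
    obtain ⟨p, _, hu⟩ := hlift (p1 a) (p2 a) (hcomm a)
    exact (hu a ⟨rfl, rfl⟩).trans (hu b ⟨hab.symm, h2.symm⟩).symm
  constructor
  · -- commutativity
    intro q
    induction q using Quot.ind with | _ p =>
    obtain ⟨n, ⟨w, hw⟩, c⟩ := p
    rw [show (Quot.mk _ ⟨n, ⟨w, hw⟩, c⟩ : HatA A P) = hatMk A w hw c from rfl]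
    -- factor p2 ∘ w
    obtain ⟨m, γ, z, hγ, hz, hzfac⟩ := exists_factorization (p2 ∘ w)
    have h1 : F P Y p1 (hatMk A w hw c) = hatMk A (p1 ∘ w) (hp1.comp hw) c :=
      hatF_apply_inj A F hF p1 w hw c (hp1.comp hw)
    -- factor f ∘ p1 ∘ w
    obtain ⟨m', β, y, hβ, hy, hyfac⟩ := exists_factorization (f ∘ p1 ∘ w)
    have h2 : F Y X f (hatMk A (p1 ∘ w) (hp1.comp hw) c) = hatMk A y hy (A.map β hβ c) :=
      hF Y X f n m' (p1 ∘ w) (hp1.comp hw) c β hβ y hy hyfac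
    have h3 : F P Z p2 (hatMk A w hw c) = hatMk A z hz (A.map γ hγ c) :=
      hF P Z p2 n m w hw c γ hγ z hz hzfac
    have h4 : F Z X g (hatMk A z hz (A.map γ hγ c)) =
        hatMk A (g ∘ z) (hmono.comp hz) (A.map γ hγ c) :=
      hatF_apply_inj A F hF g z hz (A.map γ hγ c) (hmono.comp hz)
    rw [h1, h2, h3, h4]
    exact hatMk_factor_unique A β hβ y hy γ hγ (g ∘ z) (hmono.comp hz)
      (fun i => by
        rw [← hyfac i]
        show f (p1 (w i)) = g (z (γ i))
        rw [hcomm]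
        exact congrArg g (hzfac i)) c
  · -- existence and uniqueness of lifts
    intro qa qb hab
    induction qa using Quot.ind with | _ pa =>
    induction qb using Quot.ind with | _ pb =>
    obtain ⟨n, ⟨yv, hyv⟩, u⟩ := pa
    obtain ⟨k, ⟨zv, hzv⟩, v⟩ := pb
    rw [show (Quot.mk _ ⟨n, ⟨yv, hyv⟩, u⟩ : HatA A Y) = hatMk A yv hyv u from rfl] at hab ⊢
    rw [show (Quot.mk _ ⟨k, ⟨zv, hzv⟩, v⟩ : HatA A Z) = hatMk A zv hzv v from rfl] at hab ⊢
    -- factor f ∘ yv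
    obtain ⟨m, α, xv, hα, hxv, hxfac⟩ := exists_factorization (f ∘ yv)
    rw [hF Y X f n m yv hyv u α hα xv hxv hxfac,
      hatF_apply_inj A F hF g zv hzv v (hmono.comp hzv)] at hab
    obtain ⟨e, hxe, hae⟩ := hatMk_exact A hab
    have hxe' : ∀ i, g (zv (e i)) = xv i := hxe
    have hae' : A.map ⇑e e.surjective (A.map α hα u) = v := hae
    -- define the lifted injection into P
    have hfg : ∀ j : Fin n, f (yv j) = g (zv (e (α j))) := fun j =>
      (hxfac j).trans (hxe' (α j)).symm
    let pv : Fin n → P := fun j => (hlift (yv j) (zv (e (α j))) (hfg j)).choose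
    have hpv1 : ∀ j, p1 (pv j) = yv j := fun j =>
      (hlift (yv j) (zv (e (α j))) (hfg j)).choose_spec.1.1
    have hpv2 : ∀ j, p2 (pv j) = zv (e (α j)) := fun j =>
      (hlift (yv j) (zv (e (α j))) (hfg j)).choose_spec.1.2
    have hpvinj : Function.Injective pv := by
      intro j j' hj
      exact hyv (by rw [← hpv1, ← hpv1, hj])
    refine ⟨hatMk A pv hpvinj u, ⟨?_, ?_⟩, ?_⟩
    · rw [hatF_apply_inj A F hF p1 pv hpvinj u (hp1.comp hpvinj)]
      exact hatMk_congr A _ _ (funext hpv1) u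
    · have hsurj : Function.Surjective (⇑e ∘ α) := e.surjective.comp hα
      rw [hF P Z p2 n k pv hpvinj u (⇑e ∘ α) hsurj zv hzv (fun j => hpv2 j)]
      congr 1
      rw [← hae', A.map_map]
    · rintro q' ⟨hq1, _⟩
      apply hatF_mono A F hF p1 hp1
      rw [hq1, hatF_apply_inj A F hF p1 pv hpvinj u (hp1.comp hpvinj)]
      exact (hatMk_congr A _ _ (funext hpv1) u).symm
end

section
/- Let τ : A → B be a natural transformation of functors A, B : S → Set. Then τ is weakly cartesian (each naturality square at a surjection of finite sets is a weak pullback) if and only if the induced transformation τ̂ : Â → B̂ of endofunctors of Set is weakly cartesian (each naturality square at any function is a weak pullback). -/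
namespace SFunctor

variable (A : SFunctor)

lemma map_congr_s18 {n m : ℕ} {f g : Fin n → Fin m} (h : f = g)
    (hf : Function.Surjective f) (hg : Function.Surjective g) (a : A.obj n) :
    A.map f hf a = A.map g hg a := by
  subst h; rfl

lemma map_eq_self {n : ℕ} {f : Fin n → Fin n} (hf : Function.Surjective f) (h : ∀ i, f i = i)
    (a : A.obj n) : A.map f hf a = a :=
  (A.map_congr_s18 (funext h) hf Function.surjective_id a).trans (A.map_id a)

end SFunctor

section Hat

variable {A : SFunctor} {X : Type}

lemma hatRel_equivalence_s18 : Equivalence (HatRel A X) where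
  refl _ := ⟨Equiv.refl _, fun _ => rfl, A.map_eq_self _ (fun _ => rfl) _⟩
  symm := by
    rintro p q ⟨e, hpq, hmap⟩
    refine ⟨e.symm, fun i => by simpa using (hpq (e.symm i)).symm, ?_⟩
    rw [← hmap, A.map_map]
    exact A.map_eq_self _ e.symm_apply_apply _
  trans := by
    rintro p q r ⟨e, hpq, hpq'⟩ ⟨e', hqr, hqr'⟩
    refine ⟨e.trans e', fun i => (hqr (e i)).trans (hpq i), ?_⟩
    rw [← hqr', ← hpq', A.map_map]
    rfl

lemma hatMk_eq_hatMk_iff {n m : ℕ} {x : Fin n → X} (hx : Function.Injective x) (a : A.obj n)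
    {y : Fin m → X} (hy : Function.Injective y) (b : A.obj m) :
    hatMk A x hx a = hatMk A y hy b ↔
      ∃ e : Fin n ≃ Fin m, (∀ i, y (e i) = x i) ∧ A.map e e.surjective a = b :=
  Quot.eq.trans hatRel_equivalence_s18.eqvGen_iff

lemma hatMk_id_injective {n : ℕ} {a b : A.obj n} (h : hatMk A id Function.injective_id a =
    hatMk A id Function.injective_id b) : a = b := by
  obtain ⟨e, he, rfl⟩ := (hatMk_eq_hatMk_iff _ a _ b).mp h
  exact (A.map_eq_self e.surjective he a).symm

@[elab_as_elim]
lemma HatA.ind {motive : HatA A X → Prop}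
    (mk : ∀ (n : ℕ) (x : Fin n → X) (hx : Function.Injective x) (a : A.obj n),
      motive (hatMk A x hx a))
    (p : HatA A X) : motive p :=
  Quot.ind (fun ⟨n, ⟨x, hx⟩, a⟩ => mk n x hx a) p

end Hat

lemma exists_surjective_injective_factorization {n : ℕ} {Y : Type} (g : Fin n → Y) :
    ∃ (m : ℕ) (α : Fin n → Fin m) (_ : Function.Surjective α) (y : Fin m → Y)
      (_ : Function.Injective y), ∀ i, g i = y (α i) := by
  classical
  let e := Fintype.equivFin (Set.range g)
  refine ⟨_, fun i => e ⟨g i, i, rfl⟩, ?_, fun j => (e.symm j).1,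
    Subtype.val_injective.comp e.symm.injective, fun i => by simp⟩
  intro j
  obtain ⟨i, hi⟩ := (e.symm j).2
  exact ⟨i, by simp [hi]⟩

section HatTrans

variable {A B : SFunctor} {τ : ∀ n, A.obj n → B.obj n}
  {FA : ∀ (X Y : Type), (X → Y) → HatA A X → HatA A Y}
  {FB : ∀ (X Y : Type), (X → Y) → HatA B X → HatA B Y}
  {t : ∀ X : Type, HatA A X → HatA B X}

lemma hatTrans_naturality (hτ : SNatTrans A B τ) (hFA : HatMapSpec A FA) (hFB : HatMapSpec B FB)
    (ht : HatTransSpec A B τ t) {X Y : Type} (f : X → Y) (p : HatA A X) :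
    FB X Y f (t X p) = t Y (FA X Y f p) := by
  induction p using HatA.ind with
  | mk n x hx a =>
    obtain ⟨m, α, hα, y, hy, hfac⟩ := exists_surjective_injective_factorization (f ∘ x)
    rw [ht, hFB X Y f n m x hx _ α hα y hy hfac, hFA X Y f n m x hx a α hα y hy hfac, ht, hτ]

lemma hatTrans_exists_lift
    (h : ∀ (n m : ℕ) (f : Fin n → Fin m) (hf : Function.Surjective f),
      IsWeakSetPullback (τ n) (A.map f hf) (B.map f hf) (τ m))
    (hFA : HatMapSpec A FA) (hFB : HatMapSpec B FB) (ht : HatTransSpec A B τ t)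
    {X Y : Type} (f : X → Y) (b : HatA B X) (c : HatA A Y) (hbc : FB X Y f b = t Y c) :
    ∃ p, t X p = b ∧ FA X Y f p = c := by
  induction b using HatA.ind with | mk n x hx b =>
  induction c using HatA.ind with | mk m y hy a =>
  obtain ⟨k, α, hα, z, hz, hfac⟩ := exists_surjective_injective_factorization (f ∘ x)
  rw [hFB X Y f n k x hx b α hα z hz hfac, ht] at hbc
  obtain ⟨e, hyz, hb⟩ := (hatMk_eq_hatMk_iff _ _ _ _).mp hbc
  rw [B.map_map] at hb
  obtain ⟨p, rfl, rfl⟩ := (h n m (e ∘ α) (e.surjective.comp hα)).2 b a hb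
  refine ⟨hatMk A x hx p, ht X n x hx p, hFA X Y f n m x hx p _ _ y hy fun i => ?_⟩
  exact (hfac i).trans (hyz (α i)).symm

lemma exists_lift_of_hatTrans
    (h : ∀ (X Y : Type) (f : X → Y), IsWeakSetPullback (t X) (FA X Y f) (FB X Y f) (t Y))
    (hτ : SNatTrans A B τ) (hFA : HatMapSpec A FA) (hFB : HatMapSpec B FB)
    (ht : HatTransSpec A B τ t) {n m : ℕ} (f : Fin n → Fin m) (hf : Function.Surjective f)
    (b : B.obj n) (a : A.obj m) (hba : B.map f hf b = τ m a) :
    ∃ p, τ n p = b ∧ A.map f hf p = a := by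
  have hcompat : FB _ _ f (hatMk B id Function.injective_id b) =
      t _ (hatMk A id Function.injective_id a) := by
    rw [hFB _ _ f n m id _ b f hf id _ fun _ => rfl, ht, hba]
  obtain ⟨P, hPb, hPa⟩ := (h _ _ f).2 _ _ hcompat
  induction P using HatA.ind with | mk k x hx p =>
  rw [ht] at hPb
  obtain ⟨e, hex, hb⟩ := (hatMk_eq_hatMk_iff _ _ _ _).mp hPb
  rw [hFA _ _ f k m x hx p (f ∘ e) (hf.comp e.surjective) id Function.injective_id
    fun i => congrArg f (hex i).symm] at hPa
  refine ⟨A.map e e.surjective p, (hτ k n e e.surjective p).trans hb, ?_⟩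
  rw [A.map_map]
  exact hatMk_id_injective hPa

end HatTrans

/-- A natural transformation `τ : A → B` of functors on `S` is weakly
cartesian iff the induced transformation `τ̂ : Â → B̂` is weakly cartesian. -/
theorem weakly_cartesian_iff_hat_weakly_cartesian (A B : SFunctor)
    (τ : ∀ n, A.obj n → B.obj n) (hτ : SNatTrans A B τ)
    (FA : ∀ (X Y : Type), (X → Y) → HatA A X → HatA A Y) (hFA : HatMapSpec A FA)
    (FB : ∀ (X Y : Type), (X → Y) → HatA B X → HatA B Y) (hFB : HatMapSpec B FB)
    (t : ∀ X : Type, HatA A X → HatA B X) (ht : HatTransSpec A B τ t) :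
    (∀ (n m : ℕ) (f : Fin n → Fin m) (hf : Function.Surjective f),
      IsWeakSetPullback (τ n) (A.map f hf) (B.map f hf) (τ m)) ↔
    (∀ (X Y : Type) (f : X → Y),
      IsWeakSetPullback (t X) (FA X Y f) (FB X Y f) (t Y)) := by
  constructor
  · intro h X Y f
    exact ⟨hatTrans_naturality hτ hFA hFB ht f, hatTrans_exists_lift h hFA hFB ht f⟩
  · intro h n m f hf
    exact ⟨fun a => (hτ n m f hf a).symm, exists_lift_of_hatTrans h hτ hFA hFB ht f hf⟩
end
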